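/- arXiv:2601.13101 — 3 statements merged into one kernel-verified Lean document; each statement's English description precedes it below -/
import Mathlib

section
/- Let m ≥ 2, let 1 = k₁ < k₂ < ⋯ < k_m be integers, and let c₁, …, c_m ∈ ℂ with Σ_{j=1}^m |c_j|² = 1, c₁ ≠ 0, and c_j ≠ 0 for at least one j ≥ 2. Define u(z) = (c₁ z^{k₁}, …, c_m z^{k_m}) : ℂ → ℂ^m, with complex derivative u'(z) = (k₁ c₁ z^{k₁−1}, …, k_m c_m z^{k_m−1}). Then for every z with |z| = 1: (i) ⟨u(z), z·u'(z)⟩_ℝ = Σ_{j=1}^m k_j |c_j|², (ii) ‖z·u'(z)‖ = √(Σ_{j=1}^m k_j² |c_j|²), and (iii) the quantity sin θ := (Σⱼ k_j |c_j|²)/√(Σⱼ k_j² |c_j|²) satisfies 0 < sin θ < 1. Hence the disk u(D) meets the unit sphere S^{2m−1} at a constant non-orthogonal contact angle along its free boundary. -/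
/-- For `u(z) = (c₁ z^{k₁}, …, c_m z^{k_m})` with `1 = k₁ < ⋯ < k_m`, `Σ |c_j|² = 1`,
`c₁ ≠ 0` and some `c_j ≠ 0` with `j ≥ 2`, along `|z| = 1` one has
`⟨u(z), z·u'(z)⟩_ℝ = Σ k_j |c_j|²`, `‖z·u'(z)‖ = √(Σ k_j² |c_j|²)`, and the quantity
`sin θ = (Σ k_j |c_j|²)/√(Σ k_j² |c_j|²)` lies in `(0,1)`: the disk meets `S^{2m−1}` at
a constant non-orthogonal contact angle along its free boundary. -/
theorem stmt_7 (m : ℕ) (hm : 2 ≤ m) (k : Fin m → ℕ)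
    (hk1 : k ⟨0, by omega⟩ = 1) (hk : StrictMono k)
    (c : Fin m → ℂ) (hc : ∑ j, ‖c j‖ ^ 2 = 1)
    (hc0 : c ⟨0, by omega⟩ ≠ 0)
    (hcj : ∃ j : Fin m, (j : ℕ) ≠ 0 ∧ c j ≠ 0)
    (u d : ℂ → EuclideanSpace ℂ (Fin m))
    (hu : ∀ z : ℂ, u z = fun j => c j * z ^ k j)
    (hd : ∀ z : ℂ, d z = fun j => (k j : ℂ) * c j * z ^ (k j - 1))
    (hderiv : ∀ z : ℂ, HasDerivAt u (d z) z) :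
    ∀ z : ℂ, ‖z‖ = 1 →
      (inner ℂ (u z) (z • d z) : ℂ).re = ∑ j, (k j : ℝ) * ‖c j‖ ^ 2 ∧
      ‖z • d z‖ = Real.sqrt (∑ j, (k j : ℝ) ^ 2 * ‖c j‖ ^ 2) ∧
      0 < (∑ j, (k j : ℝ) * ‖c j‖ ^ 2) /
          Real.sqrt (∑ j, (k j : ℝ) ^ 2 * ‖c j‖ ^ 2) ∧
      (∑ j, (k j : ℝ) * ‖c j‖ ^ 2) /
          Real.sqrt (∑ j, (k j : ℝ) ^ 2 * ‖c j‖ ^ 2) < 1 := by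
  intro z hz
  set A := ∑ j, (k j : ℝ) * ‖c j‖ ^ 2 with hA
  set B := ∑ j, (k j : ℝ) ^ 2 * ‖c j‖ ^ 2 with hB
  have hk1' : ∀ j, 1 ≤ k j := by
    intro j
    have : k ⟨0, by omega⟩ ≤ k j := hk.monotone (by simp [Fin.le_def])
    omega
  have hzz : (starRingEnd ℂ) z * z = 1 := by
    rw [mul_comm, Complex.mul_conj]
    norm_cast
    rw [Complex.normSq_eq_norm_sq, hz]; norm_num
  -- part 1
  have h1 : (inner ℂ (u z) (z • d z) : ℂ).re = A := by
    rw [PiLp.inner_apply, Complex.re_sum, hA]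
    refine Finset.sum_congr rfl fun j _ => ?_
    have hzp : z * z ^ (k j - 1) = z ^ k j := by
      conv_rhs => rw [show k j = (k j - 1) + 1 from by have := hk1' j; omega]
      rw [pow_succ]; ring
    have key : ((starRingEnd ℂ) (c j * z ^ k j)) * (z * ((k j : ℂ) * c j * z ^ (k j - 1)))
        = (k j : ℂ) * Complex.normSq (c j) := by
      show ((starRingEnd ℂ) (c j * z ^ k j)) * (z * ((k j : ℂ) * c j * z ^ (k j - 1))) = _
      rw [show z * ((k j : ℂ) * c j * z ^ (k j - 1)) = (k j : ℂ) * c j * (z * z ^ (k j - 1)) from by ring,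
        hzp, map_mul, map_pow]
      rw [show (starRingEnd ℂ) (c j) * ((starRingEnd ℂ) z) ^ k j * ((k j : ℂ) * c j * z ^ k j)
          = (k j : ℂ) * (c j * (starRingEnd ℂ) (c j)) * ((starRingEnd ℂ) z * z) ^ k j from by
            rw [mul_pow]; ring, hzz, one_pow, Complex.mul_conj, mul_one]
    rw [PiLp.smul_apply, hu, hd, smul_eq_mul, RCLike.inner_apply, mul_comm]
    beta_reduce
    rw [key, Complex.normSq_eq_norm_sq, ← Complex.ofReal_natCast,
      ← Complex.ofReal_mul, Complex.ofReal_re]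
  -- shared positivity facts
  have hApos : 0 < A := by
    rw [hA]
    refine Finset.sum_pos' (fun j _ => by positivity) ⟨⟨0, by omega⟩, Finset.mem_univ _, ?_⟩
    rw [hk1]
    have : 0 < ‖c ⟨0, by omega⟩‖ := by
      simpa [norm_pos_iff] using hc0
    positivity
  have hvar : B - A ^ 2 = ∑ j, ((k j : ℝ) - A) ^ 2 * ‖c j‖ ^ 2 := by
    have e : ∀ j : Fin m, ((k j : ℝ) - A) ^ 2 * ‖c j‖ ^ 2
        = (k j : ℝ) ^ 2 * ‖c j‖ ^ 2
          - 2 * A * ((k j : ℝ) * ‖c j‖ ^ 2)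
          + A ^ 2 * ‖c j‖ ^ 2 := fun j => by ring
    rw [Finset.sum_congr rfl fun j _ => e j, Finset.sum_add_distrib,
      Finset.sum_sub_distrib, ← Finset.mul_sum, ← Finset.mul_sum, ← hA, ← hB, hc]
    ring
  obtain ⟨j1, hj1, hcj1⟩ := hcj
  have hkj1 : 2 ≤ k j1 := by
    have h01 : (⟨0, by omega⟩ : Fin m) < j1 := by
      simp [Fin.lt_def, Nat.pos_of_ne_zero hj1]
    have := hk h01
    omega
  have hBA : A ^ 2 < B := by
    have hpos : 0 < ∑ j, ((k j : ℝ) - A) ^ 2 * ‖c j‖ ^ 2 := by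
      rcases eq_or_ne A 1 with hA1 | hA1
      · refine Finset.sum_pos' (fun j _ => by positivity) ⟨j1, Finset.mem_univ _, ?_⟩
        have hc1 : 0 < ‖c j1‖ := by simpa [norm_pos_iff] using hcj1
        have hne : (k j1 : ℝ) - A ≠ 0 := by
          rw [hA1]
          have : (2 : ℝ) ≤ (k j1 : ℝ) := by exact_mod_cast hkj1
          intro h; nlinarith
        positivity
      · refine Finset.sum_pos' (fun j _ => by positivity) ⟨⟨0, by omega⟩, Finset.mem_univ _, ?_⟩
        have hc1 : 0 < ‖c ⟨0, by omega⟩‖ := by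
          simpa [norm_pos_iff] using hc0
        have hne : (k (⟨0, by omega⟩ : Fin m) : ℝ) - A ≠ 0 := by
          rw [hk1]; intro h; push_cast at h
          exact hA1 (by linarith)
        positivity
    linarith [hvar, hpos]
  have hBpos : 0 < B := lt_trans (pow_pos hApos 2) hBA
  have hsq : 0 < Real.sqrt B := Real.sqrt_pos.mpr hBpos
  refine ⟨h1, ?_, div_pos hApos hsq, ?_⟩
  · rw [norm_smul, EuclideanSpace.norm_eq, hd]
    have hnz : ‖z‖ = 1 := by rw [hz]
    rw [hnz, one_mul]
    congr 1
    refine Finset.sum_congr rfl fun j _ => ?_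
    rw [norm_mul, norm_mul, norm_pow, hz, one_pow, mul_one,
      Complex.norm_natCast]
    ring
  · rw [div_lt_one hsq]
    exact (Real.lt_sqrt hApos.le).mpr hBA
end

section
/- Fix ϑ ∈ ℝ and let γ : ℝ → ℝ⁵ be the meridian curve γ(φ) = V(sin φ cos ϑ, sin φ sin ϑ, cos φ), where V is the Veronese map. Then for every φ ∈ (0, π/2): (i) ‖γ'(φ)‖ = √3; (ii) γ₅(φ) = (1/2)(3cos²φ − 1) satisfies 1 − γ₅(φ)² = (3/4)·sin²φ·(1 + 3cos²φ) > 0; and (iii) with n(y) := −(e₅ − y₅·y)/√(1 − y₅²) the outward unit normal of the level set {y₅ = const} in S⁴, one has ⟨n(γ(φ)), γ'(φ)/√3⟩ = 2cos φ/√(1 + 3cos²φ), and this value lies in (0, 1). Hence the Veronese cap meets the geodesic sphere ∂B_ρ = {y ∈ S⁴ : y₅ = γ₅(φ₀)} at a constant non-orthogonal contact angle θ with sin θ = 2cos φ₀/√(1 + 3cos²φ₀) for each φ₀ ∈ (0, π/2). -/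
/-- Along the meridian `γ(φ) = V(sin φ cos ϑ, sin φ sin ϑ, cos φ)` of the Veronese
surface, for `φ ∈ (0, π/2)`: `‖γ'(φ)‖ = √3`; the fifth component `γ₅ = (1/2)(3cos²φ−1)`
satisfies `1 − γ₅² = (3/4) sin²φ (1 + 3cos²φ) > 0`; and with the outward unit normal
`n(y) = −(e₅ − y₅ y)/√(1−y₅²)` of the level set `{y₅ = const}` in `S⁴`, one has
`⟨n(γ(φ)), γ'(φ)/√3⟩ = 2cos φ/√(1+3cos²φ) ∈ (0,1)`: the Veronese cap meets the geodesic
sphere at a constant non-orthogonal contact angle with `sin θ = 2cos φ₀/√(1+3cos²φ₀)`. -/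
theorem stmt_12 (ϑ : ℝ)
    (V : EuclideanSpace ℝ (Fin 3) → EuclideanSpace ℝ (Fin 5))
    (hV : ∀ x, V x = ![Real.sqrt 3 / 2 * (x 0 ^ 2 - x 1 ^ 2),
      Real.sqrt 3 * (x 0 * x 1), Real.sqrt 3 * (x 0 * x 2),
      Real.sqrt 3 * (x 1 * x 2), 1 / 2 * (3 * x 2 ^ 2 - 1)])
    (γ : ℝ → EuclideanSpace ℝ (Fin 5))
    (hγ : ∀ φ : ℝ, γ φ =
      V (WithLp.toLp 2 ![Real.sin φ * Real.cos ϑ, Real.sin φ * Real.sin ϑ, Real.cos φ]))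
    (n : EuclideanSpace ℝ (Fin 5) → EuclideanSpace ℝ (Fin 5))
    (hn : ∀ y, n y = -(Real.sqrt (1 - y 4 ^ 2))⁻¹ •
      (EuclideanSpace.single (4 : Fin 5) (1 : ℝ) - y 4 • y)) :
    ∀ φ : ℝ, 0 < φ → φ < Real.pi / 2 →
      ‖deriv γ φ‖ = Real.sqrt 3 ∧
      γ φ 4 = 1 / 2 * (3 * Real.cos φ ^ 2 - 1) ∧
      1 - γ φ 4 ^ 2 = 3 / 4 * Real.sin φ ^ 2 * (1 + 3 * Real.cos φ ^ 2) ∧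
      0 < 1 - γ φ 4 ^ 2 ∧
      (inner ℝ (n (γ φ)) ((Real.sqrt 3)⁻¹ • deriv γ φ) : ℝ)
        = 2 * Real.cos φ / Real.sqrt (1 + 3 * Real.cos φ ^ 2) ∧
      0 < 2 * Real.cos φ / Real.sqrt (1 + 3 * Real.cos φ ^ 2) ∧
      2 * Real.cos φ / Real.sqrt (1 + 3 * Real.cos φ ^ 2) < 1 := by
  intro φ hφ0 hφ1
  have h3 : Real.sqrt 3 ^ 2 = 3 := Real.sq_sqrt (by norm_num)
  set r : ℝ := Real.sqrt 3 with hr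
  set a : ℝ := Real.cos ϑ
  set b : ℝ := Real.sin ϑ
  set s : ℝ := Real.sin φ with hs
  set c : ℝ := Real.cos φ with hc
  have hpyϑ : b ^ 2 + a ^ 2 = 1 := Real.sin_sq_add_cos_sq ϑ
  have hpyφ : s ^ 2 + c ^ 2 = 1 := Real.sin_sq_add_cos_sq φ
  have hspos : 0 < s := Real.sin_pos_of_pos_of_lt_pi hφ0 (lt_trans hφ1 (by linarith [Real.pi_pos]))
  have hcpos : 0 < c := Real.cos_pos_of_mem_Ioo ⟨by linarith [Real.pi_pos], hφ1⟩
  -- basis vectors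
  set E : Fin 5 → EuclideanSpace ℝ (Fin 5) := fun i => EuclideanSpace.single i (1:ℝ) with hE
  -- explicit form of γ
  have hγeq : γ = fun t =>
      (r / 2 * ((Real.sin t * a) ^ 2 - (Real.sin t * b) ^ 2)) • E 0 +
      (r * (Real.sin t * a * (Real.sin t * b))) • E 1 +
      (r * (Real.sin t * a * Real.cos t)) • E 2 +
      (r * (Real.sin t * b * Real.cos t)) • E 3 +
      (1 / 2 * (3 * Real.cos t ^ 2 - 1)) • E 4 := by
    funext t
    rw [hγ]
    ext j
    rw [hV]
    fin_cases j <;>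
      simp [hE, EuclideanSpace.single_apply, PiLp.add_apply, PiLp.smul_apply]
  -- the derivative vector
  set D : EuclideanSpace ℝ (Fin 5) :=
      (r * (s * c) * (a ^ 2 - b ^ 2)) • E 0 +
      (r * (2 * s * c * a * b)) • E 1 +
      (r * (a * (c ^ 2 - s ^ 2))) • E 2 +
      (r * (b * (c ^ 2 - s ^ 2))) • E 3 +
      (-(3 * s * c)) • E 4 with hDdef
  have h0 : HasDerivAt (fun t => r / 2 * ((Real.sin t * a) ^ 2 - (Real.sin t * b) ^ 2))
      (r * (s * c) * (a ^ 2 - b ^ 2)) φ := by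
    have := ((((Real.hasDerivAt_sin φ).mul_const a).pow 2).sub
      (((Real.hasDerivAt_sin φ).mul_const b).pow 2)).const_mul (r / 2)
    exact this.congr_deriv (by rw [← hs, ← hc]; ring)
  have h1 : HasDerivAt (fun t => r * (Real.sin t * a * (Real.sin t * b)))
      (r * (2 * s * c * a * b)) φ := by
    have := (((Real.hasDerivAt_sin φ).mul_const a).mul
      ((Real.hasDerivAt_sin φ).mul_const b)).const_mul r
    exact this.congr_deriv (by rw [← hs, ← hc]; ring)
  have h2 : HasDerivAt (fun t => r * (Real.sin t * a * Real.cos t))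
      (r * (a * (c ^ 2 - s ^ 2))) φ := by
    have := (((Real.hasDerivAt_sin φ).mul_const a).mul (Real.hasDerivAt_cos φ)).const_mul r
    exact this.congr_deriv (by rw [← hs, ← hc]; ring)
  have h2' : HasDerivAt (fun t => r * (Real.sin t * b * Real.cos t))
      (r * (b * (c ^ 2 - s ^ 2))) φ := by
    have := (((Real.hasDerivAt_sin φ).mul_const b).mul (Real.hasDerivAt_cos φ)).const_mul r
    exact this.congr_deriv (by rw [← hs, ← hc]; ring)
  have h4 : HasDerivAt (fun t => 1 / 2 * (3 * Real.cos t ^ 2 - 1)) (-(3 * s * c)) φ := by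
    have := ((((Real.hasDerivAt_cos φ).pow 2).const_mul (3:ℝ)).sub_const 1).const_mul (1/2 : ℝ)
    exact this.congr_deriv (by rw [← hs, ← hc]; ring)
  have hD : HasDerivAt γ D φ := by
    rw [hγeq, hDdef]
    exact ((((h0.smul_const (E 0)).add (h1.smul_const (E 1))).add
      (h2.smul_const (E 2))).add (h2'.smul_const (E 3))).add (h4.smul_const (E 4))
  have hderiv : deriv γ φ = D := hD.deriv
  -- components of D
  have hDi : ∀ i : Fin 5, D i = ![r * (s * c) * (a ^ 2 - b ^ 2), r * (2 * s * c * a * b),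
      r * (a * (c ^ 2 - s ^ 2)), r * (b * (c ^ 2 - s ^ 2)), -(3 * s * c)] i := by
    intro i
    fin_cases i <;>
      simp [hDdef, hE, EuclideanSpace.single_apply, PiLp.add_apply, PiLp.smul_apply]
  -- components of γ φ
  have hγi : ∀ i : Fin 5, γ φ i = ![r / 2 * ((s * a) ^ 2 - (s * b) ^ 2),
      r * (s * a * (s * b)), r * (s * a * c), r * (s * b * c),
      1 / 2 * (3 * c ^ 2 - 1)] i := by
    intro i
    rw [hγeq]
    fin_cases i <;>
      simp [hE, EuclideanSpace.single_apply, PiLp.add_apply, PiLp.smul_apply, ← hs, ← hc]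
  have hγ4 : γ φ 4 = 1 / 2 * (3 * c ^ 2 - 1) := by simpa using hγi 4
  -- part (i): norm
  have hnorm : ‖deriv γ φ‖ = r := by
    rw [hderiv, EuclideanSpace.norm_eq]
    congr 1
    rw [Fin.sum_univ_five, hDi 0, hDi 1, hDi 2, hDi 3, hDi 4]
    simp only [Matrix.cons_val_zero, Matrix.cons_val_one, Matrix.head_cons,
      Matrix.cons_val_two, Matrix.tail_cons, Matrix.cons_val_three, Matrix.cons_val_four,
      Real.norm_eq_abs, sq_abs]
    rw [← h3]
    linear_combination (3*(s*c)^2*((b^2+a^2)+1) + 3*(c^2-s^2)^2) * hpyϑ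
      + 3*((s^2+c^2)+1) * hpyφ
      + ((s*c)^2*(b^2+a^2)^2 + (c^2-s^2)^2*(b^2+a^2) - 1 + (s*c)^2*(r^2+3)) * h3
  -- part (ii)
  have hgap : 1 - γ φ 4 ^ 2 = 3 / 4 * s ^ 2 * (1 + 3 * c ^ 2) := by
    rw [hγ4]; linear_combination (-3/4 - 9/4*c^2) * hpyφ
  have hgpos : 0 < 1 - γ φ 4 ^ 2 := by rw [hgap]; positivity
  set T : ℝ := Real.sqrt (1 + 3 * c ^ 2) with hT
  have hT2 : T ^ 2 = 1 + 3 * c ^ 2 := Real.sq_sqrt (by positivity)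
  have hTpos : 0 < T := Real.sqrt_pos.2 (by positivity)
  have hS : Real.sqrt (1 - γ φ 4 ^ 2) = r / 2 * s * T := by
    rw [hgap, show 3 / 4 * s ^ 2 * (1 + 3 * c ^ 2) = (r / 2 * s * T) ^ 2 by
      linear_combination (-(s^2*T^2)/4) * h3 + (-3/4*s^2) * hT2]
    exact Real.sqrt_sq (by positivity)
  have hiz : (inner ℝ (γ φ) D : ℝ) = 0 := by
    rw [PiLp.inner_apply]
    simp only [RCLike.inner_apply, conj_trivial]
    rw [Fin.sum_univ_five, hγi 0, hγi 1, hγi 2, hγi 3, hγi 4,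
      hDi 0, hDi 1, hDi 2, hDi 3, hDi 4]
    simp only [Matrix.cons_val_zero, Matrix.cons_val_one, Matrix.head_cons,
      Matrix.cons_val_two, Matrix.tail_cons, Matrix.cons_val_three, Matrix.cons_val_four]
    linear_combination (3/2*s^3*c*((b^2+a^2)+1) + 3*s*c*(c^2-s^2)) * hpyϑ
      + (-3/2*s*c) * hpyφ
      + (1/2*s^3*c*(b^2+a^2)^2 + s*c*(c^2-s^2)*(b^2+a^2)) * h3
  have hE4D : (inner ℝ (EuclideanSpace.single (4 : Fin 5) (1 : ℝ)) D : ℝ) = -(3 * s * c) := by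
    rw [EuclideanSpace.inner_single_left]
    simpa using hDi 4
  have hinner : (inner ℝ (n (γ φ)) (r⁻¹ • deriv γ φ) : ℝ) = 2 * c / T := by
    rw [hderiv, hn]
    rw [real_inner_smul_right, real_inner_smul_left, inner_sub_left,
      real_inner_smul_left, hE4D, hiz, hS]
    have hrpos : (0:ℝ) < r := Real.sqrt_pos.2 (by norm_num)
    rw [mul_zero, sub_zero]
    field_simp
    linear_combination (-1) * h3
  have hub : 2 * c / T < 1 := by
    rw [div_lt_one hTpos]
    rw [hT]
    rw [show (1:ℝ) + 3 * c ^ 2 = 1 + 3 * c ^ 2 from rfl]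
    have : 2 * c < Real.sqrt (1 + 3 * c ^ 2) := by
      rw [show (2:ℝ) * c = Real.sqrt ((2 * c) ^ 2) from
        (Real.sqrt_sq (by positivity)).symm]
      apply Real.sqrt_lt_sqrt (by positivity)
      nlinarith [hspos]
    exact this
  exact ⟨by rw [hnorm], hγ4, hgap, hgpos, hinner, by positivity, hub⟩
end

section
/- Let U ⊆ ℂ be a nonempty open connected set and let f, g : ℂ → ℂ be holomorphic on U (differentiable in the complex sense at every point of U). Suppose g is not identically zero on U and Im( f(z) · conj(g(z)) ) = 0 for every z ∈ U. Then there exists a real constant β such that f(z) = β · g(z) for all z ∈ U. -/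
lemma div_im_zero_of_mul_conj_im_zero {a b : ℂ} (hb : b ≠ 0)
    (h : (a * (starRingEnd ℂ) b).im = 0) : (a / b).im = 0 := by
  have hnum : a.im * b.re - a.re * b.im = 0 := by
    have := h
    simp [Complex.mul_im, Complex.conj_re, Complex.conj_im] at this
    linarith
  have hns : Complex.normSq b ≠ 0 := by simpa [Complex.normSq_eq_zero] using hb
  rw [Complex.div_im]
  field_simp
  linarith

/-- If `f, g` are holomorphic on a nonempty open connected `U ⊆ ℂ`, `g` is not
identically zero on `U`, and `Im(f·conj g) = 0` on `U`, then there is a real constant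
`β` with `f = β·g` on `U`. -/
theorem stmt_15 (U : Set ℂ) (hU : IsOpen U) (hUconn : IsConnected U)
    (f g : ℂ → ℂ)
    (hf : ∀ z ∈ U, DifferentiableAt ℂ f z)
    (hg : ∀ z ∈ U, DifferentiableAt ℂ g z)
    (hg0 : ∃ z ∈ U, g z ≠ 0)
    (him : ∀ z ∈ U, (f z * (starRingEnd ℂ) (g z)).im = 0) :
    ∃ β : ℝ, ∀ z ∈ U, f z = (β : ℂ) * g z := by
  obtain ⟨z₀, hz₀U, hgz₀⟩ := hg0
  -- open set where g ≠ 0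
  have hVopen : IsOpen {z | z ∈ U ∧ g z ≠ 0} := by
    rw [isOpen_iff_mem_nhds]
    rintro z ⟨hzU, hgz⟩
    have hc : ContinuousAt g z := (hg z hzU).continuousAt
    have h1 : ∀ᶠ w in nhds z, g w ≠ 0 := hc.eventually_ne hgz
    have h2 : ∀ᶠ w in nhds z, w ∈ U := hU.mem_nhds hzU
    filter_upwards [h1, h2] with w hw1 hw2 using ⟨hw2, hw1⟩
  obtain ⟨r, hr, hball⟩ := Metric.isOpen_iff.mp hVopen z₀ ⟨hz₀U, hgz₀⟩
  set B := Metric.ball z₀ r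
  have hBU : B ⊆ U := fun z hz => (hball hz).1
  have hBg : ∀ z ∈ B, g z ≠ 0 := fun z hz => (hball hz).2
  set q : ℂ → ℂ := fun z => f z / g z with hq
  have hqd : DifferentiableOn ℂ q B := fun z hz =>
    (((hf z (hBU hz)).div (hg z (hBU hz)) (hBg z hz)).differentiableWithinAt)
  have hqa : AnalyticOnNhd ℂ q B := hqd.analyticOnNhd Metric.isOpen_ball
  have hqim : ∀ z ∈ B, (q z).im = 0 := fun z hz =>
    div_im_zero_of_mul_conj_im_zero (hBg z hz) (him z (hBU hz))
  -- q is constant on B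
  have hconst : ∃ w, ∀ z ∈ B, q z = w := by
    rcases hqa.is_constant_or_isOpen (convex_ball z₀ r).isPreconnected with h | h
    · exact h
    · exfalso
      have hopen : IsOpen (q '' B) := h B (subset_refl _) Metric.isOpen_ball
      have hmem : q z₀ ∈ q '' B := ⟨z₀, Metric.mem_ball_self hr, rfl⟩
      obtain ⟨ε, hε, hballε⟩ := Metric.isOpen_iff.mp hopen _ hmem
      have hpt : q z₀ + (ε/2 : ℝ) * Complex.I ∈ q '' B := by
        apply hballε
        simp only [Metric.mem_ball, dist_eq_norm, add_sub_cancel_left]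
        rw [norm_mul, Complex.norm_I, mul_one, Complex.norm_real]
        rw [Real.norm_eq_abs, abs_of_pos (by linarith)]
        linarith
      obtain ⟨z, hzB, hzq⟩ := hpt
      have h1 : (q z).im = 0 := hqim z hzB
      have h2 : (q z).im = ε/2 := by
        rw [hzq]
        simp [Complex.add_im, hqim z₀ (Metric.mem_ball_self hr)]
      linarith
  obtain ⟨w, hw⟩ := hconst
  have hwim : w.im = 0 := by
    rw [← hw z₀ (Metric.mem_ball_self hr)]
    exact hqim z₀ (Metric.mem_ball_self hr)
  refine ⟨w.re, ?_⟩
  -- f = w * g on B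
  have hfeq : ∀ z ∈ B, f z = (w.re : ℂ) * g z := by
    intro z hz
    have h1 : q z = w := hw z hz
    have h2 : f z = w * g z := by
      rw [← h1, hq]
      simp only []
      rw [div_mul_cancel₀ _ (hBg z hz)]
    rw [h2]
    congr 1
    apply Complex.ext <;> simp [hwim]
  -- identity theorem
  have hfd : DifferentiableOn ℂ f U := fun z hz => (hf z hz).differentiableWithinAt
  have hgd : DifferentiableOn ℂ (fun z => (w.re : ℂ) * g z) U := fun z hz =>
    ((hg z hz).const_mul _).differentiableWithinAt
  have hfa : AnalyticOnNhd ℂ f U := hfd.analyticOnNhd hU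
  have hga : AnalyticOnNhd ℂ (fun z => (w.re : ℂ) * g z) U := hgd.analyticOnNhd hU
  have hev : f =ᶠ[nhds z₀] (fun z => (w.re : ℂ) * g z) := by
    filter_upwards [Metric.isOpen_ball.mem_nhds (Metric.mem_ball_self hr)] with z hz
      using hfeq z hz
  exact fun z hz =>
    hfa.eqOn_of_preconnected_of_eventuallyEq hga hUconn.isPreconnected hz₀U hev hz
end
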